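/- The modal logic K enjoys ULIP; moreover, for every formula φ and all finite sets P, Q of propositional variables there exists a uniform Lyndon interpolant θ of (φ,P,Q) in K with d(θ) ≤ d(φ). -/

import Mathlib

/-- Modal formulas: propositional variables, ⊥, →, □. -/
inductive Formula : Type
  | var : ℕ → Formula
  | bot : Formula
  | imp : Formula → Formula → Formula
  | box : Formula → Formula
  deriving DecidableEq

namespace Formula

def neg (φ : Formula) : Formula := φ.imp bot

def top : Formula := neg bot

def and (φ ψ : Formula) : Formula := (φ.imp ψ.neg).neg

def iff (φ ψ : Formula) : Formula := (φ.imp ψ).and (ψ.imp φ)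

def dia (φ : Formula) : Formula := φ.neg.box.neg

/-- Variables occurring positively (`true`) / negatively (`false`). -/
def vsgn : Formula → Bool → Finset ℕ
  | var p, true => {p}
  | var _, false => ∅
  | bot, _ => ∅
  | imp φ ψ, b => vsgn φ (!b) ∪ vsgn ψ b
  | box φ, b => vsgn φ b

def vpos (φ : Formula) : Finset ℕ := vsgn φ true
def vneg (φ : Formula) : Finset ℕ := vsgn φ false
def vars (φ : Formula) : Finset ℕ := vpos φ ∪ vneg φ

/-- Modal depth. -/
def depth : Formula → ℕ
  | var _ => 0
  | bot => 0
  | imp φ ψ => max (depth φ) (depth ψ)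
  | box φ => depth φ + 1

/-- Uniform substitution. -/
def subst (σ : ℕ → Formula) : Formula → Formula
  | var p => σ p
  | bot => bot
  | imp φ ψ => (subst σ φ).imp (subst σ ψ)
  | box φ => (subst σ φ).box

/-- The set of subformulas. -/
def subfmls : Formula → Finset Formula
  | var p => {var p}
  | bot => {bot}
  | imp φ ψ => insert (imp φ ψ) (subfmls φ ∪ subfmls ψ)
  | box φ => insert (box φ) (subfmls φ)

/-- n(φ) = |{ψ : □ψ ∈ Sub(φ)}|. -/
def boxCount (φ : Formula) : ℕ :=
  ((subfmls φ).filter fun ψ => box ψ ∈ subfmls φ).card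

/-- The translation ⋆ : p⋆ = p, ⊥⋆ = ⊥, (φ→ψ)⋆ = φ⋆→ψ⋆, (□φ)⋆ = φ⋆ ∧ □φ⋆. -/
def star : Formula → Formula
  | var p => var p
  | bot => bot
  | imp φ ψ => (star φ).imp (star ψ)
  | box φ => (star φ).and (star φ).box

end Formula

/-- Propositional tautology: true under every valuation treating variables and
boxed formulas as atoms. -/
def Tautology (φ : Formula) : Prop :=
  ∀ v : Formula → Bool, v .bot = false →
    (∀ ψ θ : Formula, v (ψ.imp θ) = (!v ψ || v θ)) → v φ = true

/-- A normal modal logic: contains all tautologies and □(p→q)→(□p→□q), and is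
closed under modus ponens, necessitation and uniform substitution. -/
structure IsNormal (L : Set Formula) : Prop where
  taut : ∀ φ, Tautology φ → φ ∈ L
  axK : ((Formula.var 0).imp (Formula.var 1)).box.imp
      ((Formula.var 0).box.imp (Formula.var 1).box) ∈ L
  mp : ∀ φ ψ : Formula, φ.imp ψ ∈ L → φ ∈ L → ψ ∈ L
  nec : ∀ φ : Formula, φ ∈ L → φ.box ∈ L
  subst_mem : ∀ φ ∈ L, ∀ σ : ℕ → Formula, Formula.subst σ φ ∈ L

/-- The least normal modal logic including `X`. -/
def NormalExt (X : Set Formula) : Set Formula :=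
  ⋂₀ {L : Set Formula | IsNormal L ∧ X ⊆ L}

/-- The least normal modal logic K. -/
def TheoryK : Set Formula := NormalExt ∅

def axT : Formula := (Formula.var 0).box.imp (Formula.var 0)
def ax4 : Formula := (Formula.var 0).box.imp (Formula.var 0).box.box
def axB : Formula := (Formula.var 0).imp (Formula.var 0).dia.box
def axD : Formula := Formula.bot.box.neg
def axGL : Formula := ((Formula.var 0).box.imp (Formula.var 0)).box.imp (Formula.var 0).box
def axGrz : Formula :=
  (((Formula.var 0).imp (Formula.var 0).box).box.imp (Formula.var 0)).box.imp (Formula.var 0)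

def TheoryKD : Set Formula := NormalExt {axD}
def TheoryKT : Set Formula := NormalExt {axT}
def TheoryKB : Set Formula := NormalExt {axB}
def TheoryKDB : Set Formula := NormalExt {axD, axB}
def TheoryKTB : Set Formula := NormalExt {axT, axB}
def TheoryK4 : Set Formula := NormalExt {ax4}
def TheoryS4 : Set Formula := NormalExt {axT, ax4}
def TheoryGL : Set Formula := NormalExt {axGL}
def TheoryGrz : Set Formula := NormalExt {axGrz}

/-- L⋆ := {φ : L ⊢ φ⋆}. -/
def starLogic (L : Set Formula) : Set Formula := {φ | Formula.star φ ∈ L}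

/-- θ is a uniform Lyndon interpolant of (φ, P, Q) in L. -/
def IsULInterpolant (L : Set Formula) (φ : Formula) (P Q : Finset ℕ) (θ : Formula) : Prop :=
  θ.vpos ⊆ φ.vpos \ P ∧ θ.vneg ⊆ φ.vneg \ Q ∧ φ.imp θ ∈ L ∧
    ∀ ψ : Formula, ψ.vpos ∩ P = ∅ → ψ.vneg ∩ Q = ∅ → φ.imp ψ ∈ L → θ.imp ψ ∈ L

/-- The uniform Lyndon interpolation property. -/
def ULIP (L : Set Formula) : Prop :=
  ∀ (φ : Formula) (P Q : Finset ℕ), ∃ θ : Formula, IsULInterpolant L φ P Q θ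

/-- The uniform interpolation property. -/
def UIP (L : Set Formula) : Prop :=
  ∀ (φ : Formula) (P : Finset ℕ), ∃ θ : Formula,
    θ.vars ⊆ φ.vars \ P ∧ φ.imp θ ∈ L ∧
      ∀ ψ : Formula, ψ.vars ∩ P = ∅ → φ.imp ψ ∈ L → θ.imp ψ ∈ L

/-- The Lyndon interpolation property. -/
def LIP (L : Set Formula) : Prop :=
  ∀ φ ψ : Formula, φ.imp ψ ∈ L → ∃ θ : Formula,
    θ.vpos ⊆ φ.vpos ∩ ψ.vpos ∧ θ.vneg ⊆ φ.vneg ∩ ψ.vneg ∧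
      φ.imp θ ∈ L ∧ θ.imp ψ ∈ L

/-- A Kripke model. -/
structure KripkeModel where
  W : Type
  nonempty : Nonempty W
  rel : W → W → Prop
  val : W → ℕ → Prop

/-- Satisfaction in a Kripke model. -/
def KripkeModel.Sat (M : KripkeModel) : Formula → M.W → Prop
  | .var p, w => M.val w p
  | .bot, _ => False
  | .imp φ ψ, w => M.Sat φ w → M.Sat ψ w
  | .box φ, w => ∀ x, M.rel w x → M.Sat φ x

/-- A (P,Q)-formula: v⁺(φ) ⊆ P and v⁻(φ) ⊆ Q. -/
def PQFormula (P Q : Finset ℕ) (φ : Formula) : Prop := φ.vpos ⊆ P ∧ φ.vneg ⊆ Q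

/-- `F n P Q` is a finite list of (P,Q)-formulas of modal depth ≤ n such that every
(P,Q)-formula of modal depth ≤ n is K-provably equivalent to some member. -/
def IsFamily (F : ℕ → Finset ℕ → Finset ℕ → List Formula) : Prop :=
  ∀ (n : ℕ) (P Q : Finset ℕ),
    (∀ φ ∈ F n P Q, PQFormula P Q φ ∧ φ.depth ≤ n) ∧
    ∀ ψ : Formula, PQFormula P Q ψ → ψ.depth ≤ n →
      ∃ φ ∈ F n P Q, Formula.iff φ ψ ∈ TheoryK

/-- Th_n^{(P,Q)}(w) = {φ ∈ F_n^{(P,Q)} : w ⊩ φ}. -/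
def Th (F : ℕ → Finset ℕ → Finset ℕ → List Formula) (M : KripkeModel)
    (n : ℕ) (P Q : Finset ℕ) (w : M.W) : Set Formula :=
  {φ | φ ∈ F n P Q ∧ M.Sat φ w}

def conjList : List Formula → Formula
  | [] => Formula.top
  | φ :: l => φ.and (conjList l)

open Classical in
/-- C_n^{(P,Q)}(w) = ⋀ Th_n^{(P,Q)}(w). -/
noncomputable def Cfml (F : ℕ → Finset ℕ → Finset ℕ → List Formula) (M : KripkeModel)
    (n : ℕ) (P Q : Finset ℕ) (w : M.W) : Formula :=
  conjList ((F n P Q).filter fun φ => decide (M.Sat φ w))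

/-- Layered (P,Q)-bisimulation between M and M'. -/
def LayeredBisim (P Q : Finset ℕ) (M M' : KripkeModel)
    (Z : M.W → ℕ → M'.W → Prop) : Prop :=
  (∀ w n w', Z w n w' →
    (∀ p ∈ P, M.val w p → M'.val w' p) ∧ (∀ q ∈ Q, ¬M.val w q → ¬M'.val w' q)) ∧
  (∀ w n w', Z w (n + 1) w' → ∀ x, M.rel w x → ∃ x', M'.rel w' x' ∧ Z x n x') ∧
  (∀ w n w', Z w (n + 1) w' → ∀ x', M'.rel w' x' → ∃ x, M.rel w x ∧ Z x n x')

/-- Downward closedness of a layered bisimulation. -/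
def DownClosed (M M' : KripkeModel) (Z : M.W → ℕ → M'.W → Prop) : Prop :=
  ∀ w n w', Z w n w' → ∀ m ≤ n, Z w m w'

/-- A class of Kripke models has ULIP. -/
def ClassULIP (F : ℕ → Finset ℕ → Finset ℕ → List Formula) (Cl : Set KripkeModel) : Prop :=
  ∀ P1 P2 P3 Q1 Q2 Q3 : Finset ℕ,
    Disjoint P1 P2 → Disjoint P1 P3 → Disjoint P2 P3 →
    Disjoint Q1 Q2 → Disjoint Q1 Q3 → Disjoint Q2 Q3 →
    ∀ M : KripkeModel, M ∈ Cl → ∀ M' : KripkeModel, M' ∈ Cl →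
    ∀ w : M.W, ∀ w' : M'.W, ∀ m n : ℕ,
      Th F M n P2 Q2 w ⊆ Th F M' n P2 Q2 w' →
      ∃ Mst : KripkeModel, Mst ∈ Cl ∧ ∃ wst : Mst.W,
        Th F M n (P1 ∪ P2) (Q1 ∪ Q2) w ⊆ Th F Mst n (P1 ∪ P2) (Q1 ∪ Q2) wst ∧
        Th F Mst m (P2 ∪ P3) (Q2 ∪ Q3) wst ⊆ Th F M' m (P2 ∪ P3) (Q2 ∪ Q3) w'

/-!
K is sound and complete for Kripke models, so the argument is semantic. Put `A = v⁺(φ) \ P`,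
`B = v⁻(φ) \ Q` and `n = d(φ)`. Finitely many `(A, B)`-formulas of depth `≤ n` suffice for
preserving them from a world `u` to a world `w` to be a layered `(A, B)`-bisimulation of height
`n`; the interpolant `θ` is the conjunction of the disjunctions of them that follow from `φ`.
If `θ ∧ ¬ψ` held at `w`, then `φ` would hold at some `u` all of whose true atoms are true at `w`.
Gluing `u` and `w` along this bisimulation gives a root that agrees with `u` on `φ` up to depth
`n` and with `w` on `ψ`, because the variables that `φ` and `ψ` share with the same sign avoid
`P` and `Q`. So the root satisfies `φ ∧ ¬ψ`, contradicting `⊢ φ → ψ`.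
-/
def disjList : List Formula → Formula
  | [] => .bot
  | φ :: l => φ.neg.imp (disjList l)

namespace Formula

theorem vsgn_neg (φ : Formula) (b : Bool) : φ.neg.vsgn b = φ.vsgn (!b) := by
  simp [neg, vsgn]

theorem depth_dia (φ : Formula) : φ.dia.depth = φ.depth + 1 := by
  simp [dia, neg, depth]

theorem depth_conjList_le {l : List Formula} {n : ℕ} (h : ∀ φ ∈ l, φ.depth ≤ n) :
    (conjList l).depth ≤ n := by
  induction l with
  | nil => simp [conjList, top, neg, depth]
  | cons φ l ih => simpa [conjList, Formula.and, neg, depth, h φ] using ih (by simp_all)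

theorem depth_disjList_le {l : List Formula} {n : ℕ} (h : ∀ φ ∈ l, φ.depth ≤ n) :
    (disjList l).depth ≤ n := by
  induction l with
  | nil => simp [disjList, depth]
  | cons φ l ih => simpa [disjList, neg, depth, h φ] using ih (by simp_all)

end Formula

namespace PQFormula

variable {A B : Finset ℕ} {φ : Formula}

theorem var {p : ℕ} (hp : p ∈ A) : PQFormula A B (.var p) := by
  simp [PQFormula, Formula.vpos, Formula.vneg, Formula.vsgn, hp]

theorem neg_var {q : ℕ} (hq : q ∈ B) : PQFormula A B (Formula.var q).neg := by
  simp [PQFormula, Formula.vpos, Formula.vneg, Formula.vsgn_neg, Formula.vsgn, hq]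

theorem neg (h : PQFormula A B φ) : PQFormula B A φ.neg := by
  simpa [PQFormula, Formula.vpos, Formula.vneg, Formula.vsgn_neg, and_comm] using h

theorem box (h : PQFormula A B φ) : PQFormula A B φ.box := h

theorem dia (h : PQFormula A B φ) : PQFormula A B φ.dia := h.neg.box.neg

theorem imp_iff {ψ : Formula} :
    PQFormula A B (φ.imp ψ) ↔ PQFormula B A φ ∧ PQFormula A B ψ := by
  simp only [PQFormula, Formula.vpos, Formula.vneg, Formula.vsgn, Bool.not_true,
    Bool.not_false, Finset.union_subset_iff]
  tauto

theorem imp {ψ : Formula} (hφ : PQFormula B A φ) (hψ : PQFormula A B ψ) :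
    PQFormula A B (φ.imp ψ) :=
  imp_iff.2 ⟨hφ, hψ⟩

theorem conjList {l : List Formula} (h : ∀ φ ∈ l, PQFormula A B φ) :
    PQFormula A B (conjList l) := by
  induction l with
  | nil => simp [PQFormula, _root_.conjList, Formula.top, Formula.neg, Formula.vpos,
      Formula.vneg, Formula.vsgn]
  | cons φ l ih =>
    exact ((h φ (by simp)).imp (ih (by simp_all)).neg).neg

theorem disjList {l : List Formula} (h : ∀ φ ∈ l, PQFormula A B φ) :
    PQFormula A B (disjList l) := by
  induction l with
  | nil => simp [PQFormula, _root_.disjList, Formula.vpos, Formula.vneg, Formula.vsgn]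
  | cons φ l ih => exact (h φ (by simp)).neg.imp (ih (by simp_all))

end PQFormula

namespace KripkeModel

variable (M : KripkeModel) {φ ψ : Formula} {w : M.W}

theorem sat_and : M.Sat (φ.and ψ) w ↔ M.Sat φ w ∧ M.Sat ψ w := by
  simp [Formula.and, Formula.neg, Sat]

theorem sat_dia : M.Sat φ.dia w ↔ ∃ x, M.rel w x ∧ M.Sat φ x := by
  simp [Formula.dia, Formula.neg, Sat]

theorem sat_conjList {l : List Formula} : M.Sat (conjList l) w ↔ ∀ φ ∈ l, M.Sat φ w := by
  induction l with
  | nil => simp [conjList, Formula.top, Formula.neg, Sat]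
  | cons φ l ih => simp [conjList, sat_and, ih]

theorem sat_disjList {l : List Formula} : M.Sat (disjList l) w ↔ ∃ φ ∈ l, M.Sat φ w := by
  induction l with
  | nil => simp [disjList, Sat]
  | cons φ l ih =>
    simp only [disjList, Formula.neg, Sat, ih, List.exists_mem_cons_iff]
    tauto

end KripkeModel

section Valuation

variable {v : Formula → Bool} {φ ψ : Formula}

theorem val_imp (h1 : ∀ ψ θ : Formula, v (ψ.imp θ) = (!v ψ || v θ)) :
    v (φ.imp ψ) = true ↔ (v φ = true → v ψ = true) := by
  cases hφ : v φ <;> simp [h1, hφ]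

theorem val_neg (h0 : v .bot = false) (h1 : ∀ ψ θ : Formula, v (ψ.imp θ) = (!v ψ || v θ)) :
    v φ.neg = true ↔ ¬v φ = true := by
  simp [Formula.neg, val_imp h1, h0]

theorem val_conjList (h0 : v .bot = false)
    (h1 : ∀ ψ θ : Formula, v (ψ.imp θ) = (!v ψ || v θ)) {l : List Formula} :
    v (conjList l) = true ↔ ∀ φ ∈ l, v φ = true := by
  induction l with
  | nil => simp [conjList, Formula.top, val_neg h0 h1, h0]
  | cons φ l ih => simp [conjList, Formula.and, val_neg h0 h1, val_imp h1, ih]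

end Valuation

theorem Tautology.subst {φ : Formula} (h : Tautology φ) (σ : ℕ → Formula) :
    Tautology (φ.subst σ) :=
  fun v h0 h1 => h (fun ψ => v (ψ.subst σ)) h0 fun ψ θ => h1 (ψ.subst σ) (θ.subst σ)

inductive KProvable : Formula → Prop
  | taut {φ : Formula} : Tautology φ → KProvable φ
  | axK (φ ψ : Formula) : KProvable ((φ.imp ψ).box.imp (φ.box.imp ψ.box))
  | mp {φ ψ : Formula} : KProvable (φ.imp ψ) → KProvable φ → KProvable ψ
  | nec {φ : Formula} : KProvable φ → KProvable φ.box

namespace KProvable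

variable {φ ψ χ : Formula}

theorem subst (h : KProvable φ) (σ : ℕ → Formula) : KProvable (φ.subst σ) := by
  induction h with
  | taut h => exact taut (h.subst σ)
  | axK φ ψ => exact axK (φ.subst σ) (ψ.subst σ)
  | mp _ _ ih₁ ih₂ => exact mp ih₁ ih₂
  | nec _ ih => exact nec ih

theorem isNormal : IsNormal {φ | KProvable φ} where
  taut _ := taut
  axK := axK _ _
  mp _ _ := mp
  nec _ := nec
  subst_mem _ h σ := h.subst σ

theorem sound (h : KProvable φ) (M : KripkeModel) (w : M.W) : M.Sat φ w := by
  classical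
  induction h generalizing w with
  | @taut φ h =>
    simpa using h (fun ψ => decide (M.Sat ψ w)) (decide_eq_false id) fun ψ θ => by
      by_cases hψ : M.Sat ψ w <;> by_cases hθ : M.Sat θ w <;> simp [KripkeModel.Sat, hψ, hθ]
  | axK φ ψ => exact fun hφψ hφ x hx => hφψ x hx (hφ x hx)
  | mp _ _ ih₁ ih₂ => exact ih₁ w (ih₂ w)
  | nec _ ih => exact fun x _ => ih x

theorem taut_mp (ht : Tautology (φ.imp ψ)) (h : KProvable φ) : KProvable ψ := mp (taut ht) h

theorem imp_trans (h₁ : KProvable (φ.imp ψ)) (h₂ : KProvable (ψ.imp χ)) :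
    KProvable (φ.imp χ) :=
  mp (taut_mp (fun v h0 h1 => by simp only [val_imp h1]; tauto) h₁) h₂

theorem box_imp_box_imp (h : KProvable (φ.imp (ψ.imp χ))) :
    KProvable (φ.box.imp (ψ.box.imp χ.box)) :=
  imp_trans (mp (axK _ _) (nec h)) (axK ψ χ)

theorem conjList_map_box (l : List Formula) :
    KProvable ((conjList (l.map .box)).imp (conjList l).box) := by
  induction l with
  | nil =>
    have htop : KProvable (conjList []).box :=
      nec (taut fun v h0 h1 => (val_conjList h0 h1).2 fun _ h => absurd h List.not_mem_nil)
    refine taut_mp (fun v h0 h1 => ?_) htop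
    simp only [val_imp h1]
    tauto
  | cons φ l ih =>
    have hstep : KProvable (φ.box.imp ((conjList l).box.imp (conjList (φ :: l)).box)) :=
      box_imp_box_imp (taut fun v h0 h1 => by
        simp only [val_imp h1, val_conjList h0 h1, List.mem_cons, forall_eq_or_imp]
        exact And.intro)
    refine mp (taut_mp (fun v h0 h1 => ?_) hstep) ih
    simp only [val_imp h1, val_conjList h0 h1, List.map_cons, List.mem_cons, forall_eq_or_imp]
    tauto

variable {Γ : Set Formula}

def Consistent (Γ : Set Formula) : Prop :=
  ∀ l : List Formula, (∀ ψ ∈ l, ψ ∈ Γ) → ¬KProvable (conjList l).neg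

def MaxConsistent (Γ : Set Formula) : Prop :=
  Consistent Γ ∧ ∀ φ, φ ∈ Γ ∨ φ.neg ∈ Γ

theorem consistent_empty : Consistent ∅ := fun _ hl h =>
  h.sound ⟨Unit, ⟨()⟩, fun _ _ => False, fun _ _ => False⟩ ()
    ((KripkeModel.sat_conjList _).2 fun ψ hψ => absurd (hl ψ hψ) id)

theorem Consistent.insert_or_insert_neg (h : Consistent Γ) (φ : Formula) :
    Consistent (insert φ Γ) ∨ Consistent (insert φ.neg Γ) := by
  by_contra! hinc
  simp only [Consistent, not_forall, not_not, Set.mem_insert_iff] at hinc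
  obtain ⟨⟨l₁, hl₁, hp₁⟩, ⟨l₂, hl₂, hp₂⟩⟩ := hinc
  refine h (l₁.filter (· ≠ φ) ++ l₂.filter (· ≠ φ.neg)) (fun ψ hψ => ?_)
    (mp (taut_mp (fun v h0 h1 => ?_) hp₁) hp₂)
  · simp only [List.mem_append, List.mem_filter, decide_eq_true_eq] at hψ
    rcases hψ with ⟨hψ, hne⟩ | ⟨hψ, hne⟩
    · exact (hl₁ ψ hψ).resolve_left hne
    · exact (hl₂ ψ hψ).resolve_left hne
  · simp only [val_imp h1, val_neg h0 h1, val_conjList h0 h1, List.mem_append, List.mem_filter,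
      decide_eq_true_eq]
    intro hn₁ hn₂ hall
    by_cases hφ : v φ = true
    · refine hn₁ fun ψ hψ => ?_
      by_cases e : ψ = φ
      · exact e ▸ hφ
      · exact hall ψ (Or.inl ⟨hψ, e⟩)
    · refine hn₂ fun ψ hψ => ?_
      by_cases e : ψ = φ.neg
      · exact e ▸ (val_neg h0 h1).2 hφ
      · exact hall ψ (Or.inr ⟨hψ, e⟩)

theorem Consistent.exists_maxConsistent (h : Consistent Γ) :
    ∃ Δ, Γ ⊆ Δ ∧ MaxConsistent Δ := by
  have hchains : ∀ c ⊆ {Δ | Consistent Δ}, IsChain (· ⊆ ·) c → c.Nonempty →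
      Consistent (⋃₀ c) := fun c hc hchain hne l hl => by
    obtain ⟨t, htc, hlt⟩ := hchain.directedOn.exists_mem_subset_of_finite_of_subset_sUnion
      hne l.finite_toSet hl
    exact hc htc l fun ψ hψ => hlt hψ
  obtain ⟨Δ, hΓΔ, hmax⟩ := zorn_subset_nonempty {Δ | Consistent Δ}
    (fun c hc hchain hne => ⟨⋃₀ c, hchains c hc hchain hne, fun _ => Set.subset_sUnion_of_mem⟩)
    Γ h
  refine ⟨Δ, hΓΔ, hmax.1, fun φ => ?_⟩
  rcases hmax.1.insert_or_insert_neg φ with h' | h'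
  · exact Or.inl (hmax.2 h' (Set.subset_insert _ _) (Set.mem_insert _ _))
  · exact Or.inr (hmax.2 h' (Set.subset_insert _ _) (Set.mem_insert _ _))

namespace MaxConsistent

theorem mem_of_kProvable (hΓ : MaxConsistent Γ) {l : List Formula} (hl : ∀ ψ ∈ l, ψ ∈ Γ)
    (h : KProvable ((conjList l).imp φ)) : φ ∈ Γ := by
  refine (hΓ.2 φ).resolve_right fun hφ => hΓ.1 (φ.neg :: l) ?_ (taut_mp (fun v h0 h1 => ?_) h)
  · simpa [hφ] using hl
  · simp only [val_imp h1, val_neg h0 h1, val_conjList h0 h1, List.mem_cons, forall_eq_or_imp]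
    tauto

theorem not_mem_of_neg_mem (hΓ : MaxConsistent Γ) (h : φ.neg ∈ Γ) : φ ∉ Γ := fun hφ =>
  hΓ.1 [φ.neg, φ] (by simp [h, hφ]) <| taut fun v h0 h1 => by
    simp only [val_neg h0 h1, val_conjList h0 h1, List.forall_mem_cons]
    tauto

theorem bot_not_mem (hΓ : MaxConsistent Γ) : Formula.bot ∉ Γ := fun h =>
  hΓ.1 [.bot] (by simpa using h) <| taut fun v h0 h1 => by
    simp [val_neg h0 h1, val_conjList h0 h1, h0]

theorem imp_mem_iff (hΓ : MaxConsistent Γ) : φ.imp ψ ∈ Γ ↔ (φ ∈ Γ → ψ ∈ Γ) := by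
  refine ⟨fun h hφ => hΓ.mem_of_kProvable (l := [φ.imp ψ, φ]) (by simp [h, hφ])
    (taut fun v h0 h1 => by simp [val_imp h1, val_conjList h0 h1]), fun h => ?_⟩
  by_cases hφ : φ ∈ Γ
  · refine hΓ.mem_of_kProvable (l := [ψ]) (by simp [h hφ]) (taut fun v h0 h1 => ?_)
    simp only [val_imp h1, val_conjList h0 h1, List.mem_singleton, forall_eq]
    tauto
  · refine hΓ.mem_of_kProvable (l := [φ.neg]) (by simp [(hΓ.2 φ).resolve_left hφ])
      (taut fun v h0 h1 => ?_)
    simp only [val_imp h1, val_neg h0 h1, val_conjList h0 h1, List.mem_singleton, forall_eq]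
    tauto

theorem exists_of_box_not_mem (hΓ : MaxConsistent Γ) (h : φ.box ∉ Γ) :
    ∃ Δ, MaxConsistent Δ ∧ (∀ ψ, ψ.box ∈ Γ → ψ ∈ Δ) ∧ φ ∉ Δ := by
  have hcons : Consistent (insert φ.neg {ψ | ψ.box ∈ Γ}) := by
    intro l hl hp
    set m := l.filter (· ≠ φ.neg)
    have hm : KProvable ((conjList m).imp φ) := by
      refine taut_mp (fun v h0 h1 => ?_) hp
      simp only [val_imp h1, val_neg h0 h1, val_conjList h0 h1, m, List.mem_filter,
        decide_eq_true_eq]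
      intro hn hall
      by_contra hφ
      exact hn fun ψ hψ => if e : ψ = φ.neg then e ▸ (val_neg h0 h1).2 hφ else hall ψ ⟨hψ, e⟩
    refine h (hΓ.mem_of_kProvable (l := m.map .box) ?_
      (imp_trans (conjList_map_box m) (mp (axK _ _) (nec hm))))
    simp only [List.mem_map, m, List.mem_filter, decide_eq_true_eq]
    rintro _ ⟨ψ, ⟨hψ, hne⟩, rfl⟩
    exact (hl ψ hψ).resolve_left hne
  obtain ⟨Δ, hsub, hΔ⟩ := hcons.exists_maxConsistent
  exact ⟨Δ, hΔ, fun ψ hψ => hsub (Set.mem_insert_of_mem _ hψ),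
    hΔ.not_mem_of_neg_mem (hsub (Set.mem_insert _ _))⟩

end MaxConsistent

def canonicalModel : KripkeModel where
  W := {Γ : Set Formula // MaxConsistent Γ}
  nonempty := by
    obtain ⟨Γ, -, hΓ⟩ := consistent_empty.exists_maxConsistent
    exact ⟨⟨Γ, hΓ⟩⟩
  rel Γ Δ := ∀ φ, φ.box ∈ Γ.1 → φ ∈ Δ.1
  val Γ p := .var p ∈ Γ.1

theorem canonicalModel_sat_iff (φ : Formula) (Γ : canonicalModel.W) :
    canonicalModel.Sat φ Γ ↔ φ ∈ Γ.1 := by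
  induction φ generalizing Γ with
  | var p => rfl
  | bot => exact iff_of_false id Γ.2.bot_not_mem
  | imp φ ψ ihφ ihψ => rw [KripkeModel.Sat, ihφ, ihψ, Γ.2.imp_mem_iff]
  | box φ ih =>
    refine ⟨fun h => ?_, fun h Δ hΓΔ => (ih Δ).2 (hΓΔ φ h)⟩
    by_contra hφ
    obtain ⟨Δ, hΔ, hΓΔ, hφΔ⟩ := Γ.2.exists_of_box_not_mem hφ
    exact hφΔ ((ih ⟨Δ, hΔ⟩).1 (h ⟨Δ, hΔ⟩ hΓΔ))

theorem of_valid (h : ∀ (M : KripkeModel) (w : M.W), M.Sat φ w) : KProvable φ := by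
  by_contra hφ
  have hcons : Consistent {φ.neg} := fun l hl hp => hφ <| taut_mp (fun v h0 h1 => by
    simp only [val_imp h1, val_neg h0 h1, val_conjList h0 h1]
    intro hn
    by_contra hv
    exact hn fun ψ hψ => (hl ψ hψ) ▸ (val_neg h0 h1).2 hv) hp
  obtain ⟨Γ, hsub, hΓ⟩ := hcons.exists_maxConsistent
  exact hΓ.not_mem_of_neg_mem (hsub rfl) ((canonicalModel_sat_iff φ ⟨Γ, hΓ⟩).1 (h _ _))

end KProvable

theorem mem_theoryK_iff {φ : Formula} : φ ∈ TheoryK ↔ KProvable φ := by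
  unfold TheoryK NormalExt
  refine ⟨fun h => Set.mem_sInter.1 h _ ⟨KProvable.isNormal, Set.empty_subset _⟩,
    fun h => Set.mem_sInter.2 fun L ⟨hL, _⟩ => ?_⟩
  induction h with
  | taut h => exact hL.taut _ h
  | axK φ ψ =>
    simpa [Formula.subst] using hL.subst_mem _ hL.axK fun n => if n = 0 then φ else ψ
  | mp _ _ ih₁ ih₂ => exact hL.mp _ _ ih₁ ih₂
  | nec _ ih => exact hL.nec _ ih

theorem mem_theoryK_iff_valid {φ : Formula} :
    φ ∈ TheoryK ↔ ∀ (M : KripkeModel) (w : M.W), M.Sat φ w :=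
  mem_theoryK_iff.trans ⟨KProvable.sound, KProvable.of_valid⟩

namespace LayeredBisim

variable {A B : Finset ℕ} {M₁ M₂ : KripkeModel} {Z : M₁.W → ℕ → M₂.W → Prop}

theorem sat_transfer (hZ : LayeredBisim A B M₁ M₂ Z) (χ : Formula) {k : ℕ} {w₁ : M₁.W}
    {w₂ : M₂.W} (hw : Z w₁ k w₂) (hd : χ.depth ≤ k) :
    (PQFormula A B χ → M₁.Sat χ w₁ → M₂.Sat χ w₂) ∧
      (PQFormula B A χ → M₂.Sat χ w₂ → M₁.Sat χ w₁) := by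
  induction χ generalizing k w₁ w₂ with
  | var p =>
    have hp : p ∈ (Formula.var p).vpos := by simp [Formula.vpos, Formula.vsgn]
    exact ⟨fun h => (hZ.1 _ _ _ hw).1 p (h.1 hp),
      fun h h₂ => by_contra fun h₁ => (hZ.1 _ _ _ hw).2 p (h.1 hp) h₁ h₂⟩
  | bot => exact ⟨fun _ => id, fun _ => id⟩
  | imp φ ψ ihφ ihψ =>
    have hφ := ihφ hw (le_of_max_le_left hd)
    have hψ := ihψ hw (le_of_max_le_right hd)
    refine ⟨fun h hs h₂ => ?_, fun h hs h₁ => ?_⟩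
    · exact hψ.1 (PQFormula.imp_iff.1 h).2 (hs (hφ.2 (PQFormula.imp_iff.1 h).1 h₂))
    · exact hψ.2 (PQFormula.imp_iff.1 h).2 (hs (hφ.1 (PQFormula.imp_iff.1 h).1 h₁))
  | box φ ih =>
    cases k with
    | zero => simp [Formula.depth] at hd
    | succ k =>
      replace hd : φ.depth ≤ k := Nat.le_of_succ_le_succ hd
      refine ⟨fun h hs x₂ hx₂ => ?_, fun h hs x₁ hx₁ => ?_⟩
      · obtain ⟨x₁, hx₁, hx⟩ := hZ.2.2 _ _ _ hw x₂ hx₂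
        exact (ih hx hd).1 h (hs x₁ hx₁)
      · obtain ⟨x₂, hx₂, hx⟩ := hZ.2.1 _ _ _ hw x₁ hx₁
        exact (ih hx hd).2 h (hs x₂ hx₂)

end LayeredBisim

section Atoms

variable (A B : Finset ℕ)

noncomputable def literals : Finset Formula :=
  A.image .var ∪ B.image fun q => (Formula.var q).neg

/-- Finitely many `(A, B)`-formulas of depth `≤ k`, chosen so that preserving all of them is a
layered `(A, B)`-bisimulation: `◇⋀s` gives the forth condition and `□⋁s` the back condition. -/
noncomputable def atoms : ℕ → Finset Formula
  | 0 => literals A B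
  | k + 1 => literals A B ∪ (atoms k).powerset.image (fun s => (conjList s.toList).dia) ∪
      (atoms k).powerset.image (fun s => (disjList s.toList).box)

variable {A B}

theorem literals_subset_atoms (k : ℕ) : literals A B ⊆ atoms A B k := by
  cases k with
  | zero => exact subset_rfl
  | succ k => exact Finset.subset_union_left.trans Finset.subset_union_left

theorem dia_conjList_mem_atoms {k : ℕ} {s : Finset Formula} (hs : s ⊆ atoms A B k) :
    (conjList s.toList).dia ∈ atoms A B (k + 1) :=
  Finset.mem_union_left _ (Finset.mem_union_right _ (Finset.mem_image_of_mem _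
    (Finset.mem_powerset.2 hs)))

theorem box_disjList_mem_atoms {k : ℕ} {s : Finset Formula} (hs : s ⊆ atoms A B k) :
    (disjList s.toList).box ∈ atoms A B (k + 1) :=
  Finset.mem_union_right _ (Finset.mem_image_of_mem _ (Finset.mem_powerset.2 hs))

theorem pqFormula_of_mem_literals {a : Formula} (ha : a ∈ literals A B) :
    PQFormula A B a ∧ a.depth = 0 := by
  simp only [literals, Finset.mem_union, Finset.mem_image] at ha
  rcases ha with ⟨p, hp, rfl⟩ | ⟨q, hq, rfl⟩
  · exact ⟨.var hp, rfl⟩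
  · exact ⟨.neg_var hq, rfl⟩

theorem pqFormula_of_mem_atoms {k : ℕ} {a : Formula} (ha : a ∈ atoms A B k) :
    PQFormula A B a ∧ a.depth ≤ k := by
  induction k generalizing a with
  | zero => exact (pqFormula_of_mem_literals ha).imp_right le_of_eq
  | succ k ih =>
    simp only [atoms, Finset.mem_union, Finset.mem_image, Finset.mem_powerset] at ha
    rcases ha with (ha | ⟨s, hs, rfl⟩) | ⟨s, hs, rfl⟩
    · exact (pqFormula_of_mem_literals ha).imp_right fun h => h.trans_le (Nat.zero_le _)
    · refine ⟨(PQFormula.conjList fun a ha => (ih (hs (Finset.mem_toList.1 ha))).1).dia, ?_⟩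
      rw [Formula.depth_dia]
      exact Nat.succ_le_succ (Formula.depth_conjList_le fun a ha =>
        (ih (hs (Finset.mem_toList.1 ha))).2)
    · refine ⟨(PQFormula.disjList fun a ha => (ih (hs (Finset.mem_toList.1 ha))).1).box,
        Nat.succ_le_succ (Formula.depth_disjList_le fun a ha =>
          (ih (hs (Finset.mem_toList.1 ha))).2)⟩

end Atoms

def AtomsPreserved (A B : Finset ℕ) (N M : KripkeModel) (x : N.W) (k : ℕ) (y : M.W) : Prop :=
  ∀ a ∈ atoms A B k, N.Sat a x → M.Sat a y

open Classical in
theorem layeredBisim_atomsPreserved (A B : Finset ℕ) (N M : KripkeModel) :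
    LayeredBisim A B N M (AtomsPreserved A B N M) := by
  refine ⟨fun x k y hxy => ⟨fun p hp => ?_, fun q hq => ?_⟩, fun x k y hxy x' hx' => ?_,
    fun x k y hxy y' hy' => ?_⟩
  · exact hxy _ (literals_subset_atoms k (Finset.mem_union_left _ (Finset.mem_image_of_mem _ hp)))
  · exact hxy _ (literals_subset_atoms k (Finset.mem_union_right _ (Finset.mem_image_of_mem _ hq)))
  · set s := (atoms A B k).filter (N.Sat · x')
    have hx : N.Sat (conjList s.toList).dia x := (N.sat_dia).2
      ⟨x', hx', (N.sat_conjList).2 fun a ha => (Finset.mem_filter.1 (Finset.mem_toList.1 ha)).2⟩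
    obtain ⟨y', hy', hs⟩ :=
      (M.sat_dia).1 (hxy _ (dia_conjList_mem_atoms (Finset.filter_subset _ _)) hx)
    exact ⟨y', hy', fun a ha hax' => (M.sat_conjList).1 hs a
      (Finset.mem_toList.2 (Finset.mem_filter.2 ⟨ha, hax'⟩))⟩
  · by_contra! hnone
    set s := (atoms A B k).filter (¬M.Sat · y')
    have hx : N.Sat (disjList s.toList).box x := fun x' hx' => by
      obtain ⟨a, ha, hax', hay'⟩ : ∃ a ∈ atoms A B k, N.Sat a x' ∧ ¬M.Sat a y' := by
        simpa [AtomsPreserved] using hnone x' hx'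
      exact (N.sat_disjList).2 ⟨a, Finset.mem_toList.2 (Finset.mem_filter.2 ⟨ha, hay'⟩), hax'⟩
    obtain ⟨a, ha, hay'⟩ := (M.sat_disjList).1
      (hxy _ (box_disjList_mem_atoms (Finset.filter_subset _ _)) hx y' hy')
    exact (Finset.mem_filter.1 (Finset.mem_toList.1 ha)).2 hay'

/-- A world `.inl (x, k, y)` glues `x` to `y` while `k` layers of `Z` remain; once they run out
only the `M`-part survives. -/
def amalgam (N M : KripkeModel) (Z : N.W → ℕ → M.W → Prop) (A B : Finset ℕ) : KripkeModel where
  W := (N.W × ℕ × M.W) ⊕ M.W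
  nonempty := ⟨.inr M.nonempty.some⟩
  rel
    | .inl (x, k, y), .inl (x', k', y') => k = k' + 1 ∧ N.rel x x' ∧ M.rel y y' ∧ Z x' k' y'
    | .inl (_, k, y), .inr y' => k = 0 ∧ M.rel y y'
    | .inr _, .inl _ => False
    | .inr y, .inr y' => M.rel y y'
  val
    | .inl (x, _, y), p => p ∈ A ∧ N.val x p ∨ p ∈ B ∧ M.val y p
    | .inr y, p => M.val y p

namespace LayeredBisim

variable {P Q A₁ B₁ A₂ B₂ : Finset ℕ} {N M : KripkeModel} {Z : N.W → ℕ → M.W → Prop}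

theorem amalgam_left (hZ : LayeredBisim P Q N M Z) (hB : B₁ ∩ B₂ ⊆ Q) :
    LayeredBisim A₁ B₁ N (amalgam N M Z A₁ B₂)
      (fun x j s => ∃ k y, s = .inl (x, k, y) ∧ Z x k y ∧ j ≤ k) := by
  refine ⟨?_, ?_, ?_⟩
  · rintro x j _ ⟨k, y, rfl, hxy, -⟩
    refine ⟨fun p hp hx => Or.inl ⟨hp, hx⟩, fun q hq hx => ?_⟩
    rintro (⟨-, hx'⟩ | ⟨hq', hy⟩)
    · exact hx hx'
    · exact (hZ.1 x k y hxy).2 q (hB (Finset.mem_inter.2 ⟨hq, hq'⟩)) hx hy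
  · rintro x j _ ⟨_ | k, y, rfl, hxy, hjk⟩ x' hx'
    · omega
    · obtain ⟨y', hy', hxy'⟩ := hZ.2.1 x k y hxy x' hx'
      exact ⟨.inl (x', k, y'), ⟨rfl, hx', hy', hxy'⟩, k, y', rfl, hxy', by omega⟩
  · rintro x j _ ⟨k, y, rfl, -, hjk⟩ (⟨x', k', y'⟩ | y') hrel
    · obtain ⟨rfl, hx', -, hxy'⟩ := hrel
      exact ⟨x', hx', k', y', rfl, hxy', by omega⟩
    · obtain ⟨rfl, -⟩ := hrel
      omega

theorem amalgam_right (hZ : LayeredBisim P Q N M Z) (hA : A₁ ∩ A₂ ⊆ P) :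
    LayeredBisim A₂ B₂ (amalgam N M Z A₁ B₂) M
      (fun s _ y => (∃ x k, s = .inl (x, k, y) ∧ Z x k y) ∨ s = .inr y) := by
  refine ⟨?_, ?_, ?_⟩
  · rintro _ - y (⟨x, k, rfl, hxy⟩ | rfl)
    · refine ⟨fun p hp => ?_, fun q hq hs hy => hs (Or.inr ⟨hq, hy⟩)⟩
      rintro (⟨hp', hx⟩ | ⟨-, hy⟩)
      · exact (hZ.1 x k y hxy).1 p (hA (Finset.mem_inter.2 ⟨hp', hp⟩)) hx
      · exact hy
    · exact ⟨fun _ _ => id, fun _ _ => id⟩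
  · rintro _ - y (⟨x, k, rfl, -⟩ | rfl) (⟨x', k', y'⟩ | y') hrel
    · exact ⟨y', hrel.2.2.1, .inl ⟨x', k', rfl, hrel.2.2.2⟩⟩
    · exact ⟨y', hrel.2, .inr rfl⟩
    · exact hrel.elim
    · exact ⟨y', hrel, .inr rfl⟩
  · rintro _ - y (⟨x, _ | k, rfl, hxy⟩ | rfl) y' hy'
    · exact ⟨.inr y', ⟨rfl, hy'⟩, .inr rfl⟩
    · obtain ⟨x', hx', hxy'⟩ := hZ.2.2 x k y hxy y' hy'
      exact ⟨.inl (x', k, y'), ⟨rfl, hx', hy', hxy'⟩, .inl ⟨x', k, rfl, hxy'⟩⟩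
    · exact ⟨.inr y', hy', .inr rfl⟩

theorem exists_amalgam (hZ : LayeredBisim P Q N M Z) (hA : A₁ ∩ A₂ ⊆ P) (hB : B₁ ∩ B₂ ⊆ Q)
    {u : N.W} {n : ℕ} {w : M.W} (hu : Z u n w) :
    ∃ (K : KripkeModel) (r : K.W),
      (∀ φ, PQFormula A₁ B₁ φ → φ.depth ≤ n → N.Sat φ u → K.Sat φ r) ∧
        ∀ ψ, PQFormula A₂ B₂ ψ → K.Sat ψ r → M.Sat ψ w :=
  ⟨amalgam N M Z A₁ B₂, .inl (u, n, w),
    fun φ hφ hd => ((hZ.amalgam_left hB).sat_transfer φ ⟨n, w, rfl, hu, le_rfl⟩ hd).1 hφ,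
    fun ψ hψ => ((hZ.amalgam_right hA).sat_transfer ψ (k := ψ.depth)
      (.inl ⟨u, n, rfl, hu⟩) le_rfl).1 hψ⟩

end LayeredBisim

section UniformInterpolant

open Classical

variable (φ : Formula) (P Q : Finset ℕ)

noncomputable def interpolantConjuncts : Finset Formula :=
  ((atoms (φ.vpos \ P) (φ.vneg \ Q) φ.depth).powerset.image fun s => disjList s.toList).filter
    fun E => φ.imp E ∈ TheoryK

noncomputable def uniformInterpolant : Formula :=
  conjList (interpolantConjuncts φ P Q).toList

variable {φ P Q}

theorem mem_interpolantConjuncts {E : Formula} :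
    E ∈ interpolantConjuncts φ P Q ↔
      (∃ s ⊆ atoms (φ.vpos \ P) (φ.vneg \ Q) φ.depth, disjList s.toList = E) ∧
        φ.imp E ∈ TheoryK := by
  simp [interpolantConjuncts]

variable (φ P Q)

theorem pqFormula_uniformInterpolant :
    PQFormula (φ.vpos \ P) (φ.vneg \ Q) (uniformInterpolant φ P Q) ∧
      (uniformInterpolant φ P Q).depth ≤ φ.depth := by
  have hE : ∀ E ∈ (interpolantConjuncts φ P Q).toList,
      PQFormula (φ.vpos \ P) (φ.vneg \ Q) E ∧ E.depth ≤ φ.depth := by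
    rintro _ hE
    obtain ⟨⟨s, hs, rfl⟩, -⟩ := mem_interpolantConjuncts.1 (Finset.mem_toList.1 hE)
    have ha : ∀ a ∈ s.toList, _ := fun a ha => pqFormula_of_mem_atoms (hs (Finset.mem_toList.1 ha))
    exact ⟨.disjList fun a h => (ha a h).1, Formula.depth_disjList_le fun a h => (ha a h).2⟩
  exact ⟨.conjList fun E h => (hE E h).1, Formula.depth_conjList_le fun E h => (hE E h).2⟩

theorem imp_uniformInterpolant_mem : φ.imp (uniformInterpolant φ P Q) ∈ TheoryK :=
  mem_theoryK_iff_valid.2 fun M w hφ => (M.sat_conjList).2 fun _ hE =>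
    mem_theoryK_iff_valid.1 (mem_interpolantConjuncts.1 (Finset.mem_toList.1 hE)).2 M w hφ

variable {φ P Q}

theorem exists_atomsPreserved_of_sat_uniformInterpolant {M : KripkeModel} {w : M.W}
    (h : M.Sat (uniformInterpolant φ P Q) w) :
    ∃ (N : KripkeModel) (u : N.W),
      N.Sat φ u ∧ AtomsPreserved (φ.vpos \ P) (φ.vneg \ Q) N M u φ.depth w := by
  by_contra! hnone
  set s := (atoms (φ.vpos \ P) (φ.vneg \ Q) φ.depth).filter (¬M.Sat · w)
  have hφs : φ.imp (disjList s.toList) ∈ TheoryK := mem_theoryK_iff_valid.2 fun N u hφ => by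
    obtain ⟨a, ha, hau, haw⟩ := by simpa [AtomsPreserved] using hnone N u hφ
    exact (N.sat_disjList).2 ⟨a, Finset.mem_toList.2 (Finset.mem_filter.2 ⟨ha, haw⟩), hau⟩
  obtain ⟨a, ha, haw⟩ := (M.sat_disjList).1 <| (M.sat_conjList).1 h _ <| Finset.mem_toList.2 <|
    mem_interpolantConjuncts.2 ⟨⟨s, Finset.filter_subset _ _, rfl⟩, hφs⟩
  exact (Finset.mem_filter.1 (Finset.mem_toList.1 ha)).2 haw

theorem uniformInterpolant_imp_mem {ψ : Formula} (hP : ψ.vpos ∩ P = ∅) (hQ : ψ.vneg ∩ Q = ∅)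
    (hψ : φ.imp ψ ∈ TheoryK) : (uniformInterpolant φ P Q).imp ψ ∈ TheoryK := by
  rw [mem_theoryK_iff_valid] at hψ ⊢
  intro M w hθ
  obtain ⟨N, u, hφ, hu⟩ := exists_atomsPreserved_of_sat_uniformInterpolant hθ
  have hA : φ.vpos ∩ ψ.vpos ⊆ φ.vpos \ P := Finset.subset_sdiff.2 ⟨Finset.inter_subset_left,
    (Finset.disjoint_iff_inter_eq_empty.2 hP).mono_left Finset.inter_subset_right⟩
  have hB : φ.vneg ∩ ψ.vneg ⊆ φ.vneg \ Q := Finset.subset_sdiff.2 ⟨Finset.inter_subset_left,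
    (Finset.disjoint_iff_inter_eq_empty.2 hQ).mono_left Finset.inter_subset_right⟩
  obtain ⟨K, r, hNK, hKM⟩ := (layeredBisim_atomsPreserved _ _ N M).exists_amalgam hA hB hu
  exact hKM ψ ⟨subset_rfl, subset_rfl⟩ (hψ K r (hNK φ ⟨subset_rfl, subset_rfl⟩ le_rfl hφ))

theorem isULInterpolant_uniformInterpolant :
    IsULInterpolant TheoryK φ P Q (uniformInterpolant φ P Q) :=
  ⟨(pqFormula_uniformInterpolant φ P Q).1.1, (pqFormula_uniformInterpolant φ P Q).1.2,
    imp_uniformInterpolant_mem φ P Q, fun _ hP hQ hψ => uniformInterpolant_imp_mem hP hQ hψ⟩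

end UniformInterpolant

/-- K enjoys ULIP, with interpolants of depth at most d(φ). -/
theorem ulip_K : ULIP TheoryK ∧
    ∀ (φ : Formula) (P Q : Finset ℕ), ∃ θ : Formula,
      IsULInterpolant TheoryK φ P Q θ ∧ θ.depth ≤ φ.depth :=
  ⟨fun _ _ _ => ⟨_, isULInterpolant_uniformInterpolant⟩,
    fun φ P Q => ⟨_, isULInterpolant_uniformInterpolant, (pqFormula_uniformInterpolant φ P Q).2⟩⟩
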